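/- Suppose 1 ≤ K ≤ N and all N·M similarity values s_{i,j} are pairwise distinct. Then for every label l ∈ 𝒴, the number of possible worlds whose K-NN prediction is l equals Σ_{i=1}^N Σ_{j=1}^M Σ_{γ ∈ Γ} 𝟙[l = pred(γ)] · Support(i,j,γ), where Γ is the set of all label-tally vectors γ : 𝒴 → ℕ with Σ_{l'} γ_{l'} = K, and pred(γ) denotes the label l' maximizing γ_{l'} (ties broken by the fixed linear order on 𝒴). (Correctness of the SS algorithm for the counting query Q2.) -/

import Mathlib

/-!
Since the similarities are pairwise distinct, the rank of an index in a world (the number of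
indices at least as similar to the test point) is a bijection onto `{1, …, N}`. Hence `Top(K, w)`
has exactly `K` elements and contains exactly one index of rank `K`, its least similar member.
So every world `w` lies in exactly one boundary set, namely `BSet(i, w i; K)` for the index `i`
of rank `K`, and its label tally lies in `Γ`. Counting the worlds with prediction `l` first by
boundary set and then by tally gives the formula.
-/

open Finset

/-- The top-`K` set of a possible world `w`: the set of indices `i` such that at most `K`
indices `i'` have similarity `s i' (w i')` at least `s i (w i)`. Under the assumption that
all similarities are pairwise distinct, this is the set of the `K` indices with the largest
similarities. -/
noncomputable def topK {N M : ℕ} (s : Fin N → Fin M → ℝ) (K : ℕ) (w : Fin N → Fin M) :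
    Finset (Fin N) :=
  Finset.univ.filter fun i =>
    (Finset.univ.filter fun i' => s i (w i) ≤ s i' (w i')).card ≤ K

/-- The boundary set `BSet(i, j; K)`: possible worlds `w` with `w i = j`, `i ∈ Top(K, w)`,
and `s i j` minimal among the similarities of the members of `Top(K, w)`. -/
noncomputable def BSet {N M : ℕ} (s : Fin N → Fin M → ℝ) (K : ℕ) (i : Fin N) (j : Fin M) :
    Finset (Fin N → Fin M) :=
  Finset.univ.filter fun w =>
    w i = j ∧ i ∈ topK s K w ∧ ∀ i' ∈ topK s K w, s i j ≤ s i' (w i')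

/-- The label tally of a possible world `w`: for each label `l`, the number of indices in
`Top(K, w)` with label `l`. -/
noncomputable def labelTally {N M : ℕ} {Y : Type*} [DecidableEq Y]
    (s : Fin N → Fin M → ℝ) (K : ℕ) (y : Fin N → Y) (w : Fin N → Fin M) : Y → ℕ :=
  fun l => ((topK s K w).filter fun n => y n = l).card

/-- `Support(i, j, γ)`: the number of possible worlds in `BSet(i,j;K)` whose label tally
is exactly `γ`. -/
noncomputable def support {N M : ℕ} {Y : Type*} [Fintype Y] [DecidableEq Y]
    (s : Fin N → Fin M → ℝ) (K : ℕ) (y : Fin N → Y) (i : Fin N) (j : Fin M)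
    (γ : Y → ℕ) : ℕ :=
  ((BSet s K i j).filter fun w => labelTally s K y w = γ).card

/-- `pred γ`: the label with the largest tally in `γ`, ties broken by the fixed linear
order on the label space (the least such label is chosen). -/
noncomputable def pred {Y : Type*} [Fintype Y] [LinearOrder Y] [Nonempty Y]
    (γ : Y → ℕ) : Y :=
  (Finset.univ.filter fun l => ∀ l', γ l' ≤ γ l).min' (by
    obtain ⟨b, -, hb⟩ := Finset.exists_max_image (Finset.univ : Finset Y) γ
      ⟨Classical.arbitrary Y, Finset.mem_univ _⟩
    exact ⟨b, Finset.mem_filter.mpr ⟨Finset.mem_univ _, fun l' => hb l' (Finset.mem_univ _)⟩⟩)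

/-- The K-NN prediction of a possible world `w`: the label maximizing the label tally of
`w`, ties broken by the fixed linear order on the label space. -/
noncomputable def knnPred {N M : ℕ} {Y : Type*} [Fintype Y] [LinearOrder Y] [Nonempty Y]
    (s : Fin N → Fin M → ℝ) (K : ℕ) (y : Fin N → Y) (w : Fin N → Fin M) : Y :=
  pred (labelTally s K y w)

section Rank

variable {N M : ℕ} (s : Fin N → Fin M → ℝ) (w : Fin N → Fin M)

noncomputable def simRank (i : Fin N) : ℕ :=
  #{i' | s i (w i) ≤ s i' (w i')}

theorem topK_eq_filter_simRank_le (K : ℕ) :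
    topK s K w = univ.filter fun i => simRank s w i ≤ K := rfl

variable {s w}

theorem simRank_lt_simRank_of_lt {i i' : Fin N} (h : s i (w i) < s i' (w i')) :
    simRank s w i' < simRank s w i := by
  refine card_lt_card ((ssubset_iff_of_subset ?_).mpr ⟨i, by simp, by simp [h]⟩)
  exact monotone_filter_right _ fun _ _ hx => h.le.trans hx

variable (hs : Function.Injective fun p : Fin N × Fin M => s p.1 p.2)
include hs

theorem eq_of_sim_eq {i i' : Fin N} (h : s i (w i) = s i' (w i')) : i = i' :=
  congrArg Prod.fst (hs h : ((i, w i) : Fin N × Fin M) = (i', w i'))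

theorem simRank_injective : Function.Injective (simRank s w) := by
  intro i i' hii'
  rcases lt_trichotomy (s i (w i)) (s i' (w i')) with h | h | h
  · exact absurd hii' (simRank_lt_simRank_of_lt h).ne'
  · exact eq_of_sim_eq hs h
  · exact absurd hii' (simRank_lt_simRank_of_lt h).ne

theorem simRank_le_simRank_iff {i i' : Fin N} :
    simRank s w i' ≤ simRank s w i ↔ s i (w i) ≤ s i' (w i') := by
  refine ⟨fun h => not_lt.mp fun hlt => h.not_gt (simRank_lt_simRank_of_lt hlt), fun h => ?_⟩
  rcases h.lt_or_eq with h | h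
  · exact (simRank_lt_simRank_of_lt h).le
  · exact (eq_of_sim_eq hs h).symm ▸ le_rfl

theorem image_simRank : univ.image (simRank s w) = Icc 1 N := by
  refine eq_of_subset_of_card_le (fun k hk => ?_) ?_
  · obtain ⟨i, -, rfl⟩ := mem_image.mp hk
    exact mem_Icc.mpr ⟨card_pos.mpr ⟨i, by simp⟩, (card_filter_le _ _).trans (by simp)⟩
  · simp [card_image_of_injective _ (simRank_injective hs)]

theorem exists_simRank_eq {K : ℕ} (hK1 : 1 ≤ K) (hKN : K ≤ N) : ∃ i, simRank s w i = K := by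
  have : K ∈ univ.image (simRank s w) := image_simRank hs ▸ mem_Icc.mpr ⟨hK1, hKN⟩
  simpa using this

theorem card_topK {K : ℕ} (hKN : K ≤ N) : #(topK s K w) = K := by
  rw [topK_eq_filter_simRank_le, ← card_image_of_injective _ (simRank_injective hs (w := w)),
    ← filter_image (p := fun k => k ≤ K), image_simRank hs]
  have : {k ∈ Icc 1 N | k ≤ K} = Icc 1 K := by ext; simp only [mem_filter, mem_Icc]; omega
  simp [this]

theorem mem_BSet_iff {K : ℕ} (hK1 : 1 ≤ K) (hKN : K ≤ N) {i : Fin N} {j : Fin M} :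
    w ∈ BSet s K i j ↔ w i = j ∧ simRank s w i = K := by
  obtain ⟨i₀, hi₀⟩ := exists_simRank_eq hs (w := w) hK1 hKN
  simp only [BSet, topK_eq_filter_simRank_le, mem_filter, mem_univ, true_and]
  constructor
  · rintro ⟨rfl, hiK, hmin⟩
    exact ⟨rfl, hiK.antisymm (hi₀ ▸ (simRank_le_simRank_iff hs).mpr (hmin i₀ hi₀.le))⟩
  · rintro ⟨rfl, hiK⟩
    exact ⟨rfl, hiK.le, fun i' hi' => (simRank_le_simRank_iff hs).mp (hiK ▸ hi')⟩

theorem existsUnique_mem_BSet {K : ℕ} (hK1 : 1 ≤ K) (hKN : K ≤ N) :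
    ∃! p : Fin N × Fin M, w ∈ BSet s K p.1 p.2 := by
  obtain ⟨i, hi⟩ := exists_simRank_eq hs (w := w) hK1 hKN
  refine ⟨(i, w i), (mem_BSet_iff hs hK1 hKN).mpr ⟨rfl, hi⟩, fun p h => ?_⟩
  obtain ⟨hj, hi'⟩ := (mem_BSet_iff hs hK1 hKN).mp h
  have hpi : p.1 = i := simRank_injective hs (hi'.trans hi.symm)
  exact Prod.ext hpi (hj.symm.trans (congrArg w hpi))

end Rank

theorem card_filter_eq_sum_card_filter_BSet {N M K : ℕ} {s : Fin N → Fin M → ℝ}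
    (hs : Function.Injective fun p : Fin N × Fin M => s p.1 p.2) (hK1 : 1 ≤ K) (hKN : K ≤ N)
    (P : (Fin N → Fin M) → Prop) [DecidablePred P] :
    #{w | P w} = ∑ i, ∑ j, #{w ∈ BSet s K i j | P w} := by
  choose boundary hboundary using fun w => existsUnique_mem_BSet hs (w := w) hK1 hKN
  have mem_BSet_iff_boundary_eq {w} {p : Fin N × Fin M} :
      w ∈ BSet s K p.1 p.2 ↔ boundary w = p :=
    ⟨fun h => ((hboundary w).2 p h).symm, fun h => h ▸ (hboundary w).1⟩
  rw [card_eq_sum_card_fiberwise (f := boundary) (t := univ) fun _ _ => mem_univ _,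
    ← Fintype.sum_prod_type']
  refine sum_congr rfl fun p _ => congrArg card (ext fun w => ?_)
  simp only [mem_filter, mem_univ, true_and, mem_BSet_iff_boundary_eq, and_comm]

theorem sum_labelTally {N M K : ℕ} {Y : Type*} [Fintype Y] [DecidableEq Y]
    {s : Fin N → Fin M → ℝ} (hs : Function.Injective fun p : Fin N × Fin M => s p.1 p.2)
    (hKN : K ≤ N) (y : Fin N → Y) (w : Fin N → Fin M) :
    ∑ l, labelTally s K y w l = K :=
  (card_eq_sum_card_fiberwise (f := y) (t := univ) fun _ _ => mem_univ _).symm.trans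
    (card_topK hs hKN)

theorem sum_ite_pred_support {N M K : ℕ} {Y : Type*} [Fintype Y] [LinearOrder Y]
    [Nonempty Y] {s : Fin N → Fin M → ℝ}
    (hs : Function.Injective fun p : Fin N × Fin M => s p.1 p.2) (hKN : K ≤ N)
    (y : Fin N → Y) (l : Y) (i : Fin N) (j : Fin M) :
    ∑ γ ∈ (Fintype.piFinset fun _ : Y => range (K + 1)).filter (fun γ => ∑ l', γ l' = K),
        (if l = pred γ then support s K y i j γ else 0) =
      #{w ∈ BSet s K i j | knnPred s K y w = l} := by
  have labelTally_mem (w : Fin N → Fin M) :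
      labelTally s K y w ∈ (Fintype.piFinset fun _ : Y => range (K + 1)).filter
        (fun γ => ∑ l', γ l' = K) := by
    refine mem_filter.mpr ⟨Fintype.mem_piFinset.mpr fun l' => ?_, sum_labelTally hs hKN y w⟩
    exact mem_range_succ_iff.mpr ((card_filter_le _ _).trans (card_topK hs hKN).le)
  rw [← sum_filter, card_eq_sum_card_fiberwise (f := labelTally s K y)
    (t := {γ ∈ _ | l = pred γ})
    fun w hw => mem_filter.mpr ⟨labelTally_mem w, (mem_filter.mp hw).2.symm⟩]
  refine sum_congr rfl fun γ hγ => congrArg card (ext fun w => ?_)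
  simp only [mem_filter]
  constructor
  · rintro ⟨hw, rfl⟩
    exact ⟨⟨hw, (mem_filter.mp hγ).2.symm⟩, rfl⟩
  · exact fun ⟨⟨hw, _⟩, hγw⟩ => ⟨hw, hγw⟩

/-- **correctness of the SS algorithm for Q2.** If `1 ≤ K ≤ N` and all
similarities are pairwise distinct, then for every label `l`, the number of possible worlds
whose K-NN prediction is `l` equals
`Σ_i Σ_j Σ_{γ ∈ Γ} 𝟙[l = pred γ] · Support(i,j,γ)`, where `Γ` is the set of all
label-tally vectors summing to `K`. -/
theorem stmt5 (N M K : ℕ) (hK1 : 1 ≤ K) (hKN : K ≤ N)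
    {Y : Type*} [Fintype Y] [LinearOrder Y] [Nonempty Y] (y : Fin N → Y)
    (s : Fin N → Fin M → ℝ)
    (hs : Function.Injective fun p : Fin N × Fin M => s p.1 p.2)
    (l : Y) :
    (Finset.univ.filter fun w : Fin N → Fin M => knnPred s K y w = l).card =
      ∑ i : Fin N, ∑ j : Fin M,
        ∑ γ ∈ (Fintype.piFinset fun _ : Y => Finset.range (K + 1)).filter
            (fun γ : Y → ℕ => ∑ l' : Y, γ l' = K),
          if l = pred γ then support s K y i j γ else 0 := by
  rw [card_filter_eq_sum_card_filter_BSet hs hK1 hKN]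
  simp only [sum_ite_pred_support hs hKN]
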